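/- Application of a unary inclusion dependency in the chase never causes a chase failure: if the ID chase rule is applied for an ID r1[k1] ⊆ r2[k2] involving a single attribute on each side, the newly added fact has fresh constants in all positions except possibly position k2, hence any key-dependency violation it creates can be repaired by the KD chase rule without equating two distinct non-fresh constants. -/

import Mathlib

/-- Constants: `Sum.inl` = non-fresh constants (dom), `Sum.inr` = fresh constants (Γ_f). -/
abbrev Const := ℕ ⊕ ℕ

def nonFresh (c : Const) : Prop := ∃ n, c = Sum.inl n
def isFresh (c : Const) : Prop := ∃ n, c = Sum.inr n

/-- An atom over an argument type `α` (for facts, `α = Const`; for query bodies, terms). -/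
structure GAtom (α : Type) where
  rel : String
  args : List α
deriving DecidableEq

abbrev Atom := GAtom Const
/-- A (possibly infinite) database instance is a set of facts. -/
abbrev DB := Set Atom

def mapAtom (f : Const → Const) (a : Atom) : Atom := ⟨a.rel, a.args.map f⟩

/-- `μ` is a homomorphism from the set of atoms `D1` to `D2` (as a map on constants). -/
def isHom (μ : Const → Const) (D1 D2 : DB) : Prop := ∀ a ∈ D1, mapAtom μ a ∈ D2

/-- `μ` fixes all non-fresh constants. -/
def homFix (μ : Const → Const) : Prop := ∀ n : ℕ, μ (Sum.inl n) = Sum.inl n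

/-- `c` occurs as an argument of some fact of `D`. -/
def occursC (c : Const) (D : DB) : Prop := ∃ a ∈ D, c ∈ a.args

/-! Outside position `k2` the new fact holds only fresh constants absent from `S`, so a fact `s`
of `S` sharing a constant with it at a key position shares it at `k2`, and no position pairs two
distinct non-fresh constants. Sending each of those pairwise distinct fresh constants to the entry
of `s` at the same position merges the two facts and moves no non-fresh constant. -/

namespace List

variable {α : Type*}

open Classical in
noncomputable def mergeMap (l₁ l₂ : List α) (P : ℕ → Prop) (c : α) : α :=
  if h : ∃ i, P i ∧ l₁[i]? = some c then l₂[h.choose]?.getD c else c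

variable {l₁ l₂ : List α} {P : ℕ → Prop}

theorem mergeMap_of_not_exists {c : α} (h : ¬∃ i, P i ∧ l₁[i]? = some c) :
    mergeMap l₁ l₂ P c = c :=
  dif_neg h

theorem mergeMap_of_getElem?_eq_some
    (hinj : ∀ i j c, P i → P j → l₁[i]? = some c → l₁[j]? = some c → i = j)
    {i : ℕ} {a b : α} (hi : P i) (ha : l₁[i]? = some a) (hb : l₂[i]? = some b) :
    mergeMap l₁ l₂ P a = b := by
  have h : ∃ i, P i ∧ l₁[i]? = some a := ⟨i, hi, ha⟩
  have hchoose : h.choose = i := hinj _ _ a h.choose_spec.1 hi h.choose_spec.2 ha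
  rw [mergeMap, dif_pos h, hchoose, hb, Option.getD_some]

theorem map_mergeMap_eq (hlen : l₁.length = l₂.length)
    (hinj : ∀ i j c, P i → P j → l₁[i]? = some c → l₁[j]? = some c → i = j)
    (hdisj : ∀ i c, P i → l₁[i]? = some c → c ∉ l₂)
    (hagree : ∀ i, ¬P i → l₁[i]? = l₂[i]?) :
    l₁.map (mergeMap l₁ l₂ P) = l₂.map (mergeMap l₁ l₂ P) := by
  refine ext_getElem? fun n => ?_
  rw [getElem?_map, getElem?_map]
  by_cases hP : P n
  swap
  · rw [hagree n hP]
  obtain hn | hn := lt_or_ge n l₁.length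
  · have hn₂ : n < l₂.length := hlen ▸ hn
    have hb_fixed : mergeMap l₁ l₂ P l₂[n] = l₂[n] :=
      mergeMap_of_not_exists fun ⟨j, hj, hjb⟩ => hdisj j _ hj hjb (getElem_mem hn₂)
    rw [getElem?_eq_getElem hn, getElem?_eq_getElem hn₂, Option.map_some, Option.map_some,
      hb_fixed, mergeMap_of_getElem?_eq_some hinj hP (getElem?_eq_getElem hn)
        (getElem?_eq_getElem hn₂)]
  · rw [getElem?_eq_none hn, getElem?_eq_none (hlen ▸ hn)]

end List

theorem not_nonFresh_of_isFresh {c : Const} (hc : isFresh c) : ¬nonFresh c := by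
  rintro ⟨m, rfl⟩
  obtain ⟨n, hn⟩ := hc
  cases hn

section FreshFact

variable {S : DB} {t' : Atom} {k2 : ℕ}

theorem fresh_not_mem_args
    (hfresh : ∀ i, i < t'.args.length → i ≠ k2 →
      ∃ c, t'.args[i]? = some c ∧ isFresh c ∧ ¬ occursC c S)
    {s : Atom} (hs : s ∈ S) {i : ℕ} {c : Const} (hi : i ≠ k2) (hc : t'.args[i]? = some c) :
    isFresh c ∧ c ∉ s.args := by
  obtain ⟨c', hc', hfr, hocc⟩ := hfresh i (getElem?_eq_some_iff.mp hc).1 hi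
  obtain rfl : c = c' := Option.some.inj (hc.symm.trans hc')
  exact ⟨hfr, fun hmem => hocc ⟨s, hs, hmem⟩⟩

theorem position_eq_of_shared_const
    (hfresh : ∀ i, i < t'.args.length → i ≠ k2 →
      ∃ c, t'.args[i]? = some c ∧ isFresh c ∧ ¬ occursC c S)
    {s : Atom} (hs : s ∈ S) {k : ℕ} {c : Const}
    (hkt : t'.args[k]? = some c) (hks : s.args[k]? = some c) : k = k2 := by
  by_contra hk
  exact (fresh_not_mem_args hfresh hs hk hkt).2 (List.mem_of_getElem? hks)

end FreshFact

/-- a fact `t'` added by the chase rule of a unary inclusion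
dependency `r1[k1] ⊆ r2[k2]` has (pairwise distinct) fresh constants, not
occurring in the current instance `S`, in all positions other than `k2`.
Consequently, for any fact `s` of `S` agreeing with `t'` on a key position `k`,
no position of `t'` and `s` holds two distinct non-fresh constants, and the two
facts can be merged by a map that never changes a non-fresh constant: the KD
chase rule application cannot fail. -/
theorem unary_id_application_never_fails
    (S : DB) (t' : Atom) (k2 : ℕ)
    (hfresh : ∀ i, i < t'.args.length → i ≠ k2 →
      ∃ c, t'.args[i]? = some c ∧ isFresh c ∧ ¬ occursC c S)
    (hdist : ∀ i j, i < t'.args.length → j < t'.args.length → i ≠ j → i ≠ k2 → j ≠ k2 →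
      t'.args[i]? ≠ t'.args[j]?) :
    ∀ s ∈ S, s.rel = t'.rel → s.args.length = t'.args.length →
      ∀ k : ℕ, (∃ c, t'.args[k]? = some c ∧ s.args[k]? = some c) →
      (∀ i : ℕ, ¬ ∃ u v : Const, t'.args[i]? = some u ∧ s.args[i]? = some v ∧
        nonFresh u ∧ nonFresh v ∧ u ≠ v) ∧
      (∃ μ : Const → Const, (∀ c, ¬ isFresh c → μ c = c) ∧ mapAtom μ t' = mapAtom μ s) := by
  rintro s hs hrel hlen k ⟨c, hkt, hks⟩
  obtain rfl := position_eq_of_shared_const hfresh hs hkt hks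
  have hagree : ∀ i, ¬i ≠ k → t'.args[i]? = s.args[i]? := fun i hi => by
    rw [not_not.mp hi, hkt, hks]
  refine ⟨?_, List.mergeMap t'.args s.args (· ≠ k), ?_, ?_⟩
  · rintro i ⟨u, v, hu, hv, hnu, -, huv⟩
    by_cases hik : i = k
    · subst hik
      rw [hkt, Option.some.injEq] at hu
      rw [hks, Option.some.injEq] at hv
      exact huv (hu.symm.trans hv)
    · exact not_nonFresh_of_isFresh (fresh_not_mem_args hfresh hs hik hu).1 hnu
  · intro c hc
    refine List.mergeMap_of_not_exists fun ⟨i, hik, hi⟩ => hc ?_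
    exact (fresh_not_mem_args hfresh hs hik hi).1
  · have hinj : ∀ i j c, i ≠ k → j ≠ k → t'.args[i]? = some c → t'.args[j]? = some c → i = j :=
      fun i j c hi hj hic hjc => by_contra fun hij =>
        hdist i j (List.getElem?_eq_some_iff.mp hic).1 (List.getElem?_eq_some_iff.mp hjc).1
          hij hi hj (hic.trans hjc.symm)
    have hargs := List.map_mergeMap_eq hlen.symm hinj
      (fun i c hi hc => (fresh_not_mem_args hfresh hs hi hc).2) hagree
    simp only [mapAtom, hrel, hargs]
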